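/- Let G⁺ be a positive homogeneously presented cancellative monoid carrying a fundamental element Δ and satisfying the LCM condition. Then for every w ∈ G⁺ the property P(w;Δ) holds: every right transit element of w is left-divisible by a right transit element that also left-divides Δ. Consequently the conjugacy problem in G⁺ is solvable. -/
import Mathlib


/-- An atom of a monoid: a non-identity element that is indecomposable. -/
def IsMonAtom {M : Type*} [Monoid M] (a : M) : Prop :=
  a ≠ 1 ∧ ∀ b c : M, a = b * c → b = 1 ∨ c = 1

/-- A monoid is atomic if it carries a norm `ν` with `ν α = 0 ↔ α = 1` and
`ν (αβ) ≥ ν α + ν β`. -/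
def IsAtomicMonoid (M : Type*) [Monoid M] : Prop :=
  ∃ ν : M → ℕ, (∀ a : M, ν a = 0 ↔ a = 1) ∧ ∀ a b : M, ν a + ν b ≤ ν (a * b)

/-- Cancellation condition: `a * x * b = a * y * b` implies `x = y`. -/
def IsCancellative (M : Type*) [Monoid M] : Prop :=
  ∀ a b x y : M, a * x * b = a * y * b → x = y

/-- The monoid is generated by its atoms. -/
def GeneratedByAtoms (M : Type*) [Monoid M] : Prop :=
  Submonoid.closure {a : M | IsMonAtom a} = ⊤

/-- Quasi-central element: `s·Δ = Δ·σ(s)` for a permutation `σ` of the atoms. -/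
def IsQuasiCentral {M : Type*} [Monoid M] (Δ : M) : Prop :=
  ∃ σ : {a : M // IsMonAtom a} ≃ {a : M // IsMonAtom a},
    ∀ s : {a : M // IsMonAtom a}, (s : M) * Δ = Δ * (σ s : M)

/-- Fundamental element: there is a permutation `σ` of the atoms such that for every
atom `s` one has `Δ = s·Δ_s = Δ_s·σ(s)` for some `Δ_s`. -/
def IsFundamental {M : Type*} [Monoid M] (Δ : M) : Prop :=
  ∃ σ : {a : M // IsMonAtom a} ≃ {a : M // IsMonAtom a},
    ∀ s : {a : M // IsMonAtom a}, ∃ d : M, Δ = (s : M) * d ∧ Δ = d * (σ s : M)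


/-- `m` is a right least common multiple of `u` and `v`. -/
def IsRightLcm {M : Type*} [Monoid M] (u v m : M) : Prop :=
  (∃ w, m = u * w) ∧ (∃ w, m = v * w) ∧
    ∀ m' : M, (∃ w, m' = u * w) → (∃ w, m' = v * w) → ∃ w, m' = m * w

/-- `m` is a left least common multiple of `u` and `v`. -/
def IsLeftLcm {M : Type*} [Monoid M] (u v m : M) : Prop :=
  (∃ w, m = w * u) ∧ (∃ w, m = w * v) ∧
    ∀ m' : M, (∃ w, m' = w * u) → (∃ w, m' = w * v) → ∃ w, m' = w * m

/-- `d` is a left greatest common divisor of `u` and `v`. -/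
def IsLeftGcd {M : Type*} [Monoid M] (u v d : M) : Prop :=
  (∃ w, u = d * w) ∧ (∃ w, v = d * w) ∧
    ∀ d' : M, (∃ w, u = d' * w) → (∃ w, v = d' * w) → ∃ w, d = d' * w

/-- `d` is a right greatest common divisor of `u` and `v`. -/
def IsRightGcd {M : Type*} [Monoid M] (u v d : M) : Prop :=
  (∃ w, u = w * d) ∧ (∃ w, v = w * d) ∧
    ∀ d' : M, (∃ w, u = w * d') → (∃ w, v = w * d') → ∃ w, d = w * d'


/-- Left divisibility. -/
def LeftDvd {M : Type*} [Monoid M] (u v : M) : Prop := ∃ w : M, v = u * w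

/-- One step of positive conjugation of u by a left divisor A of Δ: A·v = u·A. -/
def ConjStep {M : Type*} [Monoid M] (Δ u v : M) : Prop :=
  ∃ A : M, LeftDvd A Δ ∧ A * v = u * A

/-- The set O(w; Δ) obtained from w by iterated conjugation by left divisors of Δ. -/
def ConjOrbit {M : Type*} [Monoid M] (Δ w : M) : Set M :=
  {V | Relation.ReflTransGen (ConjStep Δ) w V}

/-- The positive conjugacy class Conj⁺(w) = { V ∣ ∃ A, A·V = w·A }. -/
def PosConj {M : Type*} [Monoid M] (w : M) : Set M := {V | ∃ A : M, A * V = w * A}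

/-- A right transit element of w: a nontrivial A with A·Q = w·A for some Q. -/
def IsRightTransit {M : Type*} [Monoid M] (w A : M) : Prop :=
  A ≠ 1 ∧ ∃ Q : M, A * Q = w * A

/-- Property P(w; Δ): every right transit element of w is left-divisible by a right
transit element of w that also left-divides Δ. -/
def PropertyP {M : Type*} [Monoid M] (w Δ : M) : Prop :=
  ∀ A : M, IsRightTransit w A →
    ∃ δA : M, IsRightTransit w δA ∧ LeftDvd δA A ∧ LeftDvd δA Δ


/-- Left gcds exist in a cancellative monoid with a length function and right lcms. -/
lemma exists_leftGcd {M : Type*} [Monoid M]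
    (len : M → ℕ) (hlen : ∀ a b : M, len (a * b) = len a + len b)
    (hlen1 : ∀ a : M, len a = 0 ↔ a = 1)
    (hlcm : ∀ u v : M, ∃ m, IsRightLcm u v m) (u v : M) :
    ∃ d, IsLeftGcd u v d := by
  set D : Set M := {d | LeftDvd d u ∧ LeftDvd d v} with hD
  set S : Set ℕ := len '' D with hS
  have h1 : (1 : M) ∈ D := ⟨⟨u, (one_mul u).symm⟩, ⟨v, (one_mul v).symm⟩⟩
  have hbdd : BddAbove S := by
    refine ⟨len u, ?_⟩
    rintro k ⟨d, ⟨⟨w, hw⟩, -⟩, rfl⟩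
    have : len u = len d + len w := by rw [hw, hlen]
    omega
  have hmem : sSup S ∈ S := Nat.sSup_mem ⟨len 1, ⟨1, h1, rfl⟩⟩ hbdd
  obtain ⟨d, hdD, hd⟩ := hmem
  have hmax : ∀ d' ∈ D, len d' ≤ len d := by
    intro d' hd'
    rw [hd]
    exact le_csSup hbdd ⟨d', hd', rfl⟩
  refine ⟨d, hdD.1, hdD.2, ?_⟩
  rintro d' ⟨a, ha⟩ ⟨b, hb⟩
  obtain ⟨m, ⟨x, hx⟩, ⟨y, hy⟩, hm⟩ := hlcm d d'
  have hmu : ∃ z, u = m * z := by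
    refine hm u hdD.1 ⟨a, ha⟩
  have hmv : ∃ z, v = m * z := by
    refine hm v hdD.2 ⟨b, hb⟩
  have hmD : m ∈ D := ⟨hmu, hmv⟩
  have hlm : len m ≤ len d := hmax m hmD
  have hlx : len x = 0 := by
    have : len m = len d + len x := by rw [hx, hlen]
    omega
  have hx1 : x = 1 := (hlen1 x).mp hlx
  have hmd : m = d := by rw [hx, hx1, mul_one]
  exact ⟨y, by rw [← hmd, hy]⟩

/-- Every nontrivial element has an atom as a left divisor. -/
lemma exists_atom_head {M : Type*} [Monoid M] (hgen : GeneratedByAtoms M) (w : M) :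
    w = 1 ∨ ∃ s a : M, IsMonAtom s ∧ w = s * a := by
  have hw : w ∈ Submonoid.closure {a : M | IsMonAtom a} := by
    rw [hgen]; trivial
  induction hw using Submonoid.closure_induction with
  | mem s hs => exact Or.inr ⟨s, 1, hs, (mul_one s).symm⟩
  | one => exact Or.inl rfl
  | mul x y hx hy ihx ihy =>
    rcases ihx with rfl | ⟨s, a, hs, rfl⟩
    · simpa using ihy
    · exact Or.inr ⟨s, a * y, hs, mul_assoc s a y⟩

/-- A fundamental element is quasi-central: every element commutes with Δ up to a twist. -/
lemma fundamental_comm {M : Type*} [Monoid M] (hgen : GeneratedByAtoms M)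
    (Δ : M) (hΔ : IsFundamental Δ) (w : M) : ∃ w' : M, w * Δ = Δ * w' := by
  obtain ⟨σ, hσ⟩ := hΔ
  have hw : w ∈ Submonoid.closure {a : M | IsMonAtom a} := by
    rw [hgen]; trivial
  induction hw using Submonoid.closure_induction with
  | mem s hs =>
    obtain ⟨d, h1, h2⟩ := hσ ⟨s, hs⟩
    exact ⟨(σ ⟨s, hs⟩ : M), by rw [h2]; rw [← mul_assoc, ← h1, h2]⟩
  | one => exact ⟨1, by rw [one_mul, mul_one]⟩
  | mul x y hx hy ihx ihy =>
    obtain ⟨x', hx'⟩ := ihx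
    obtain ⟨y', hy'⟩ := ihy
    exact ⟨x' * y', by rw [mul_assoc, hy', ← mul_assoc, hx', mul_assoc]⟩

/-- In a positive homogeneously presented cancellative monoid carrying a fundamental
element Δ and satisfying the LCM condition, property P(w; Δ) holds for every w, and
consequently O(w; Δ) equals the positive conjugacy class of every w (so the conjugacy
problem is solvable). -/
theorem stmt_14 {M : Type*} [Monoid M] (hcan : IsCancellative M)
    (len : M → ℕ) (hlen : ∀ a b : M, len (a * b) = len a + len b)
    (hlen1 : ∀ a : M, len a = 0 ↔ a = 1)
    (hgen : GeneratedByAtoms M)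
    (hlcm : ∀ u v : M, (∃ m, IsRightLcm u v m) ∧ (∃ m, IsLeftLcm u v m))
    (Δ : M) (hΔ : IsFundamental Δ) :
    (∀ w : M, PropertyP w Δ) ∧ (∀ w : M, ConjOrbit Δ w = PosConj w) := by
  -- left cancellation
  have lcancel : ∀ a x y : M, a * x = a * y → x = y := by
    intro a x y h
    exact hcan a 1 x y (by simpa using h)
  have hrlcm : ∀ u v : M, ∃ m, IsRightLcm u v m := fun u v => (hlcm u v).1
  -- Property P
  have hP : ∀ w : M, PropertyP w Δ := by
    intro w A hA
    obtain ⟨hA1, Q, hAQ⟩ := hA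
    -- atom head of A
    rcases exists_atom_head hgen A with rfl | ⟨s, A₁, hs, hAeq⟩
    · exact absurd rfl hA1
    -- s divides Δ
    obtain ⟨σ, hσ⟩ := hΔ
    obtain ⟨ds, hΔs, _⟩ := hσ ⟨s, hs⟩
    -- g = left gcd of A and Δ
    obtain ⟨g, hgA, hgΔ, hguniv⟩ := exists_leftGcd len hlen hlen1 hrlcm A Δ
    -- s left-divides g, hence g ≠ 1
    obtain ⟨t, hst⟩ := hguniv s ⟨A₁, hAeq⟩ ⟨ds, hΔs⟩
    have hg1 : g ≠ 1 := by
      intro h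
      have : len g = len s + len t := by rw [hst, hlen]
      have hls : len s = 0 := by
        have := (hlen1 g).mpr h
        omega
      exact hs.1 ((hlen1 s).mp hls)
    -- commutation of w with Δ
    obtain ⟨W, hWΔ⟩ := fundamental_comm hgen Δ ⟨σ, hσ⟩ w
    -- h = left gcd of w*A and w*Δ
    obtain ⟨h, hhA, hhΔ, hhuniv⟩ := exists_leftGcd len hlen hlen1 hrlcm (w * A) (w * Δ)
    obtain ⟨a, ha⟩ := hgA
    obtain ⟨b, hb⟩ := hgΔ
    -- g left-divides w*A and w*Δ
    have hgwA : ∃ z, w * A = g * z := ⟨a * Q, by rw [← hAQ, ha, mul_assoc]⟩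
    have hgwΔ : ∃ z, w * Δ = g * z := ⟨b * W, by rw [hWΔ, hb, mul_assoc]⟩
    -- w left-divides w*A and w*Δ
    obtain ⟨h', hh'⟩ := hhuniv w ⟨A, rfl⟩ ⟨Δ, rfl⟩
    obtain ⟨h'', hh''⟩ := hhuniv g hgwA hgwΔ
    -- h' is a common left divisor of A and Δ
    obtain ⟨z, hz⟩ := hhA
    obtain ⟨z', hz'⟩ := hhΔ
    have hAh' : A = h' * z := by
      apply lcancel w
      rw [← mul_assoc, ← hh', ← hz]
    have hΔh' : Δ = h' * z' := by
      apply lcancel w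
      rw [← mul_assoc, ← hh', ← hz']
    obtain ⟨t', ht'⟩ := hguniv h' ⟨z, hAh'⟩ ⟨z', hΔh'⟩
    -- conclude: w * g = g * (h'' * t')
    have hwg : w * g = g * (h'' * t') := by
      have e1 : w * g = h * t' := by rw [ht', ← mul_assoc, ← hh']
      have e2 : h * t' = g * (h'' * t') := by rw [hh'', mul_assoc]
      rw [e1, e2]
    exact ⟨g, ⟨hg1, h'' * t', hwg.symm⟩, ⟨a, ha⟩, ⟨b, hb⟩⟩
  refine ⟨hP, ?_⟩
  intro w
  ext V
  constructor
  · -- ConjOrbit ⊆ PosConj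
    intro hV
    induction hV with
    | refl => exact ⟨1, by rw [one_mul, mul_one]⟩
    | tail _ hstep ih =>
      obtain ⟨C, hC⟩ := ih
      obtain ⟨B, _, hB⟩ := hstep
      exact ⟨C * B, by rw [mul_assoc, hB, ← mul_assoc, hC, mul_assoc]⟩
  · -- PosConj ⊆ ConjOrbit
    rintro ⟨A, hA⟩
    have key : ∀ n : ℕ, ∀ u A V : M, len A ≤ n → A * V = u * A →
        Relation.ReflTransGen (ConjStep Δ) u V := by
      intro n
      induction n with
      | zero =>
        intro u A V hlA hAV
        have hA1 : A = 1 := (hlen1 A).mp (Nat.le_zero.mp hlA)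
        subst hA1
        have : V = u := by rw [← one_mul V, hAV, mul_one]
        rw [this]
      | succ n ih =>
        intro u A V hlA hAV
        by_cases hA1 : A = 1
        · subst hA1
          have : V = u := by rw [← one_mul V, hAV, mul_one]
          rw [this]
        · obtain ⟨δ, ⟨hδ1, Q₁, hδQ⟩, ⟨A₁, hA₁⟩, hδΔ⟩ := hP u A ⟨hA1, V, hAV⟩
          have hstep : ConjStep Δ u Q₁ := ⟨δ, hδΔ, hδQ⟩
          have h2 : A₁ * V = Q₁ * A₁ := by
            apply lcancel δ
            rw [← mul_assoc, ← hA₁, hAV, hA₁, ← mul_assoc, ← hδQ, mul_assoc]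
          have hlδ : 1 ≤ len δ := by
            rcases Nat.eq_zero_or_pos (len δ) with h0 | h0
            · exact absurd ((hlen1 δ).mp h0) hδ1
            · exact h0
          have hlA₁ : len A₁ ≤ n := by
            have : len A = len δ + len A₁ := by rw [hA₁, hlen]
            omega
          exact Relation.ReflTransGen.head hstep (ih Q₁ A₁ V hlA₁ h2)
    exact key (len A) w A V le_rfl hA
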